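/- Let (E, ℰ) be a measurable space and X_1, …, X_N (N ≥ 1) independent E-valued random variables with X_k distributed according to a probability measure μ_k. Let h_1, …, h_N : E → ℝ be measurable functions with ∫_E h_k dμ_k = 0 for every k and σ(h) < ∞. Then for every ε ≥ 0, E[ exp(ε √N |m(X)(h)|) ] ≤ 1 + ε σ(h) ( 1 − √(π/2) + √(π/2) · e^{ε² σ²(h)/8} · [1 + erf(ε σ(h)/√8)] ). -/

import Mathlib

open MeasureTheory ProbabilityTheory Real

/-- The oscillation of a real-valued function: `sup {|h x - h y| : x y}`. -/
noncomputable def osc {E : Type*} (h : E → ℝ) : ℝ :=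
  ⨆ q : E × E, |h q.1 - h q.2|

/-- The error function `erf(x) = (2/√π) ∫₀ˣ exp(−t²) dt`. -/
noncomputable def erf (x : ℝ) : ℝ :=
  (2 / Real.sqrt Real.pi) * ∫ t in (0:ℝ)..x, Real.exp (-t ^ 2)

/-! Write `S = ∑ₖ hₖ(Xₖ)` and `t = ε / √N`; pointwise `e^{t|S|} ≤ e^{tS} + e^{-tS} - 1 + t|S|`.
Each `hₖ(Xₖ)` is centred with values in an interval of length `osc hₖ`, so by Hoeffding's lemma
both exponential moments of `tS` are at most `e^{u²/8}` with `u = ε σ(h)`, and by Popoviciu's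
inequality `𝔼 S² ≤ N σ²(h) / 4`, whence `t 𝔼|S| ≤ u / 2`. The resulting bound
`2 e^{u²/8} - 1 + u / 2` lies below the stated one by an elementary inequality in which the `erf`
term is not even needed. -/

section Oscillation

variable {E : Type*} {f : E → ℝ}

lemma le_osc (hf : BddAbove (Set.range fun q : E × E => |f q.1 - f q.2|)) (x y : E) :
    |f x - f y| ≤ osc f :=
  le_ciSup hf (x, y)

lemma mem_Icc_iInf_add_osc (hf : BddAbove (Set.range fun q : E × E => |f q.1 - f q.2|))
    (x : E) :
    f x ∈ Set.Icc (⨅ y, f y) ((⨅ y, f y) + osc f) := by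
  have hlow : ∀ y, f x - osc f ≤ f y := fun y => by
    linarith [le_osc hf x y, le_abs_self (f x - f y)]
  have hbdd : BddBelow (Set.range f) := ⟨f x - osc f, Set.forall_mem_range.2 hlow⟩
  have : Nonempty E := ⟨x⟩
  exact ⟨ciInf_le hbdd x, by linarith [le_ciInf hlow]⟩

end Oscillation

lemma erf_nonneg {x : ℝ} (hx : 0 ≤ x) : 0 ≤ erf x :=
  mul_nonneg (by positivity)
    (intervalIntegral.integral_nonneg hx fun t _ => (exp_pos _).le)

lemma exp_abs_add_one_le_exp_add_exp_neg_add_abs (a : ℝ) :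
    exp |a| + 1 ≤ exp a + exp (-a) + |a| := by
  rcases abs_cases a with ⟨h, _⟩ | ⟨h, _⟩ <;> rw [h] <;>
    linarith [add_one_le_exp (-a), add_one_le_exp a]

/-- Already with `w = 0` this says `(e^{u²/8} - 1)(2 - √(π/2) u) ≤ u / 2`. When `√(π/2) u < 2`
we have `u < 2`, hence `e^{u²/8} - 1 ≤ u²/4`, and `u (2 - √(π/2) u) ≤ 1`. -/
lemma two_mul_exp_sub_one_add_le {u w : ℝ} (hu : 0 ≤ u) (hw : 0 ≤ w) :
    2 * exp (u ^ 2 / 8) - 1 + u / 2 ≤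
      1 + u * (1 - √(π / 2) + √(π / 2) * exp (u ^ 2 / 8) * (1 + w)) := by
  set s := √(π / 2)
  set e := exp (u ^ 2 / 8)
  have hs : 1 ≤ s := Real.one_le_sqrt.2 (by linarith [pi_gt_three])
  have he : 1 ≤ e := one_le_exp (by positivity)
  have hw_term : 0 ≤ u * s * e * w := by positivity
  rcases le_or_gt 2 (s * u) with hsu | hsu
  · nlinarith
  · have hu2 : u < 2 := by nlinarith
    have he2 : e ≤ 2 := by
      calc e ≤ exp (1 / 2) := exp_le_exp.2 (by nlinarith)
        _ ≤ 2 := by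
          have hsq : exp (1 / 2) ^ 2 = exp 1 := by rw [← exp_nat_mul]; norm_num
          nlinarith [exp_pos (1 / 2), exp_one_lt_d9]
    have hsub : e - 1 ≤ u ^ 2 / 8 * e := by
      have := add_one_le_exp (-(u ^ 2 / 8))
      have h1 : exp (-(u ^ 2 / 8)) * e = 1 := by rw [← exp_add]; simp
      nlinarith
    have he1 : e - 1 ≤ u ^ 2 / 4 := by nlinarith
    have hprod : u * (2 - s * u) ≤ 1 := by nlinarith [sq_nonneg (1 - s * u)]
    have key : (e - 1) * (2 - s * u) ≤ u / 4 := by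
      calc (e - 1) * (2 - s * u) ≤ u ^ 2 / 4 * (2 - s * u) :=
            mul_le_mul_of_nonneg_right he1 (by linarith)
        _ = u / 4 * (u * (2 - s * u)) := by ring
        _ ≤ u / 4 := by nlinarith
    nlinarith

open scoped NNReal

namespace ProbabilityTheory

variable {Ω : Type*} [MeasurableSpace Ω] {μ : Measure Ω} [IsProbabilityMeasure μ]

lemma integral_abs_le_sqrt_integral_sq {X : Ω → ℝ} (hX : MemLp X 2 μ) :
    ∫ ω, |X ω| ∂μ ≤ √(∫ ω, X ω ^ 2 ∂μ) := by
  have h := variance_nonneg |X| μ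
  rw [variance_eq_sub hX.abs] at h
  simp only [Pi.pow_apply, Pi.abs_apply, sq_abs] at h
  exact Real.le_sqrt_of_sq_le (by linarith)

lemma HasSubgaussianMGF.integral_exp_mul_abs_le {X : Ω → ℝ} {c : ℝ≥0}
    (hX : HasSubgaussianMGF X c μ) {t : ℝ} (ht : 0 ≤ t) :
    ∫ ω, exp (t * |X ω|) ∂μ ≤ 2 * exp (c * t ^ 2 / 2) - 1 + t * ∫ ω, |X ω| ∂μ := by
  have hpos := hX.integrable_exp_mul t
  have hneg := hX.integrable_exp_mul (-t)
  have hpt : ∀ ω, exp (t * |X ω|) ≤ exp (t * X ω) + exp (-t * X ω) - 1 + t * |X ω| := by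
    intro ω
    have := exp_abs_add_one_le_exp_add_exp_neg_add_abs (t * X ω)
    rw [abs_mul, abs_of_nonneg ht, ← neg_mul] at this
    linarith
  calc ∫ ω, exp (t * |X ω|) ∂μ
      ≤ ∫ ω, (exp (t * X ω) + exp (-t * X ω) - 1 + t * |X ω|) ∂μ :=
        integral_mono_of_nonneg (ae_of_all _ fun _ => (exp_pos _).le)
          (((hpos.add hneg).sub (integrable_const 1)).add (hX.integrable.abs.const_mul t))
          (ae_of_all _ hpt)
    _ = mgf X μ t + mgf X μ (-t) - 1 + t * ∫ ω, |X ω| ∂μ := by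
        rw [integral_add ?_ (hX.integrable.abs.const_mul t), integral_sub ?_ (integrable_const 1),
          integral_add hpos hneg, integral_const_mul]
        · simp [mgf]
        · exact hpos.add hneg
        · exact (hpos.add hneg).sub (integrable_const 1)
    _ ≤ 2 * exp (c * t ^ 2 / 2) - 1 + t * ∫ ω, |X ω| ∂μ := by
        have := hX.mgf_le (-t)
        rw [neg_sq] at this
        linarith [hX.mgf_le t]

lemma integral_exp_mul_abs_sum_le {ι : Type*} [Fintype ι] {Y : ι → Ω → ℝ}
    (hindep : iIndepFun Y μ) (hmeas : ∀ i, AEMeasurable (Y i) μ) {a b : ι → ℝ}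
    (hbdd : ∀ i, ∀ᵐ ω ∂μ, Y i ω ∈ Set.Icc (a i) (b i)) (hmean : ∀ i, μ[Y i] = 0)
    {t : ℝ} (ht : 0 ≤ t) :
    ∫ ω, exp (t * |∑ i, Y i ω|) ∂μ ≤
      2 * exp ((t * √(∑ i, (b i - a i) ^ 2)) ^ 2 / 8) - 1 + t * √(∑ i, (b i - a i) ^ 2) / 2 := by
  set D := ∑ i, (b i - a i) ^ 2
  have hD : 0 ≤ D := Finset.sum_nonneg fun i _ => sq_nonneg _
  have hY i : HasSubgaussianMGF (Y i) ((‖b i - a i‖₊ / 2) ^ 2) μ :=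
    hasSubgaussianMGF_of_mem_Icc_of_integral_eq_zero (hmeas i) (hbdd i) (hmean i)
  have hS := HasSubgaussianMGF.sum_of_iIndepFun hindep (s := Finset.univ) fun i _ => hY i
  have hc : ((∑ i, (‖b i - a i‖₊ / 2) ^ 2 : ℝ≥0) : ℝ) = D / 4 := by
    push_cast
    simp only [Real.norm_eq_abs, div_pow, sq_abs, D, Finset.sum_div]
    norm_num
  have hsq : ∫ ω, (∑ i, Y i ω) ^ 2 ∂μ ≤ D / 4 := by
    have hvar := IndepFun.variance_sum (s := Finset.univ) (fun i _ => (hY i).memLp 2)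
      fun i _ j _ hij => hindep.indepFun hij
    rw [← variance_of_integral_eq_zero hS.aemeasurable ?_]
    · rw [← Finset.sum_fn, hvar, Finset.sum_div]
      refine Finset.sum_le_sum fun i _ => ?_
      calc Var[Y i; μ] ≤ ((b i - a i) / 2) ^ 2 := variance_le_sq_of_bounded (hbdd i) (hmeas i)
        _ = (b i - a i) ^ 2 / 4 := by ring
    · simp [integral_finsetSum _ fun i _ => (hY i).integrable, hmean]
  calc ∫ ω, exp (t * |∑ i, Y i ω|) ∂μ
      ≤ 2 * exp (D / 4 * t ^ 2 / 2) - 1 + t * ∫ ω, |∑ i, Y i ω| ∂μ := by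
        simpa [hc] using hS.integral_exp_mul_abs_le ht
    _ ≤ 2 * exp (D / 4 * t ^ 2 / 2) - 1 + t * √(D / 4) := by
        gcongr
        exact (integral_abs_le_sqrt_integral_sq (hS.memLp 2)).trans (Real.sqrt_le_sqrt hsq)
    _ = 2 * exp ((t * √D) ^ 2 / 8) - 1 + t * √D / 2 := by
        rw [mul_pow, Real.sq_sqrt hD, Real.sqrt_div' _ (by norm_num : (0:ℝ) ≤ 4),
          show √4 = (2 : ℝ) by rw [show (4 : ℝ) = 2 ^ 2 by norm_num, Real.sqrt_sq zero_le_two]]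
        ring_nf

end ProbabilityTheory

theorem mgf_empirical_measure_bound_general
    {E : Type*} [MeasurableSpace E] {Ω : Type*} [MeasurableSpace Ω]
    (μ : Measure Ω) [IsProbabilityMeasure μ]
    (N : ℕ)
    (X : Fin N → Ω → E) (μs : Fin N → Measure E)
    (hmeas : ∀ k, Measurable (X k))
    (hindep : iIndepFun X μ)
    (hlaw : ∀ k, Measure.map (X k) μ = μs k)
    (h : Fin N → E → ℝ) (hmh : ∀ k, Measurable (h k))
    (hosc : ∀ k, BddAbove (Set.range fun q : E × E => |h k q.1 - h k q.2|))
    (hcentered : ∀ k, ∫ x, h k x ∂(μs k) = 0)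
    (ε : ℝ) (hε : 0 ≤ ε) :
    (∫ ω, Real.exp (ε * Real.sqrt N * |(1 / (N : ℝ)) * ∑ k, h k (X k ω)|) ∂μ) ≤
      1 + ε * Real.sqrt ((1 / (N : ℝ)) * ∑ k, (osc (h k)) ^ 2) *
        (1 - Real.sqrt (Real.pi / 2) + Real.sqrt (Real.pi / 2) *
          Real.exp (ε ^ 2 / 8 * ((1 / (N : ℝ)) * ∑ k, (osc (h k)) ^ 2)) *
          (1 + erf (ε * Real.sqrt ((1 / (N : ℝ)) * ∑ k, (osc (h k)) ^ 2) /
            Real.sqrt 8))) := by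
  set σ2 := (1 / (N : ℝ)) * ∑ k, osc (h k) ^ 2
  have hmean k : ∫ ω, h k (X k ω) ∂μ = 0 := by
    rw [← integral_map (hmeas k).aemeasurable (hmh k).aestronglyMeasurable, hlaw k, hcentered k]
  have hsum := integral_exp_mul_abs_sum_le (hindep.comp h hmh)
    (fun k => ((hmh k).comp (hmeas k)).aemeasurable)
    (fun k => ae_of_all _ fun ω => mem_Icc_iInf_add_osc (hosc k) (X k ω)) hmean
    (t := ε * √N * (1 / N)) (by positivity)
  have hscale : ε * √N * (1 / N) * √(∑ k, osc (h k) ^ 2) = ε * √σ2 := by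
    rw [Real.sqrt_mul (by positivity), Real.sqrt_div' _ (Nat.cast_nonneg N), Real.sqrt_one,
      ← Real.sqrt_div_self']
    ring
  have hlhs ω : ε * √N * |1 / (N : ℝ) * ∑ k, h k (X k ω)| =
      ε * √N * (1 / N) * |∑ k, h k (X k ω)| := by
    rw [abs_mul, abs_of_nonneg (by positivity)]
    ring
  simp only [Function.comp_apply, add_sub_cancel_left, hscale] at hsum
  simp only [hlhs]
  have hexp : (ε * √σ2) ^ 2 / 8 = ε ^ 2 / 8 * σ2 := by
    rw [mul_pow, Real.sq_sqrt (by positivity)]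
    ring
  have hfinal := two_mul_exp_sub_one_add_le (u := ε * √σ2) (w := erf (ε * √σ2 / √8))
    (by positivity) (erf_nonneg (by positivity))
  rw [hexp] at hsum hfinal
  exact hsum.trans hfinal

/-- Theorem 3: bound on the moment-generating function of the centered
empirical measure `m(X)(h) = (1/N) ∑ₖ hₖ(Xₖ)`, where
`σ(h) = √((1/N) ∑ₖ osc(hₖ)²)`. -/
theorem mgf_empirical_measure_bound
    {E : Type*} [MeasurableSpace E] {Ω : Type*} [MeasurableSpace Ω]
    (μ : Measure Ω) [IsProbabilityMeasure μ]
    (N : ℕ) (hN : 1 ≤ N)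
    (X : Fin N → Ω → E) (μs : Fin N → Measure E)
    [∀ k, IsProbabilityMeasure (μs k)]
    (hmeas : ∀ k, Measurable (X k))
    (hindep : iIndepFun X μ)
    (hlaw : ∀ k, Measure.map (X k) μ = μs k)
    (h : Fin N → E → ℝ) (hmh : ∀ k, Measurable (h k))
    (hosc : ∀ k, BddAbove (Set.range fun q : E × E => |h k q.1 - h k q.2|))
    (hcentered : ∀ k, ∫ x, h k x ∂(μs k) = 0)
    (ε : ℝ) (hε : 0 ≤ ε) :
    (∫ ω, Real.exp (ε * Real.sqrt N * |(1 / (N : ℝ)) * ∑ k, h k (X k ω)|) ∂μ) ≤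
      1 + ε * Real.sqrt ((1 / (N : ℝ)) * ∑ k, (osc (h k)) ^ 2) *
        (1 - Real.sqrt (Real.pi / 2) + Real.sqrt (Real.pi / 2) *
          Real.exp (ε ^ 2 / 8 * ((1 / (N : ℝ)) * ∑ k, (osc (h k)) ^ 2)) *
          (1 + erf (ε * Real.sqrt ((1 / (N : ℝ)) * ∑ k, (osc (h k)) ^ 2) /
            Real.sqrt 8))) :=
  mgf_empirical_measure_bound_general μ N X μs hmeas hindep hlaw h hmh hosc hcentered ε hε
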